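/- arXiv:2110.04628 — 2 statements merged into one kernel-verified Lean document; each statement's English description precedes it below -/
import Mathlib

section
/- Let d ≥ 1, let μ be a Borel probability measure on ℝ^d, and let π be a μ-test plan. Then there exists a Borel set Ā of Lipschitz curves with π(Ā) = 1 such that for every Borel set A of curves with π(A) = 1 and every μ-measurable E^A-saturated set Ω, there exists a μ-measurable E^{Ā}-saturated set Ω' with μ(Ω Δ Ω') = 0. -/
open MeasureTheory Set
open scoped ENNReal NNReal

noncomputable section

abbrev Euc (d : ℕ) : Type := EuclideanSpace ℝ (Fin d)

abbrev Curve (d : ℕ) : Type := C(unitInterval, Euc d)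

instance (d : ℕ) : MeasurableSpace (Curve d) := borel _
instance (d : ℕ) : BorelSpace (Curve d) := ⟨rfl⟩

/-- The extension of a curve to all of `ℝ`, constant outside `[0,1]`. -/
def cext {d : ℕ} (γ : Curve d) : ℝ → Euc d :=
  fun t => γ (Set.projIcc 0 1 zero_le_one t)

/-- The metric speed `|γ'(t)|` of a curve (the a.e. defined derivative of a Lipschitz curve). -/
def cspeed {d : ℕ} (γ : Curve d) (t : ℝ) : ℝ := ‖deriv (cext γ) t‖

def IsLipCurve {d : ℕ} (γ : Curve d) : Prop := ∃ K : ℝ≥0, LipschitzWith K (cext γ)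

def IsClosedCurve {d : ℕ} (γ : Curve d) : Prop := γ 0 = γ 1

/-- `π` is a `μ`-test plan: a Borel probability measure on curves, concentrated on Lipschitz
curves, with the compressibility property. -/
def IsTestPlan {d : ℕ} (μ : Measure (Euc d)) (π : Measure (Curve d)) : Prop :=
  IsProbabilityMeasure π ∧ π {γ | IsLipCurve γ}ᶜ = 0 ∧
    ∃ C : ℝ≥0, ∀ φ : Euc d → ℝ≥0∞, Measurable φ →
      (∫⁻ γ, (∫⁻ t in Icc (0:ℝ) 1, φ (cext γ t) * ENNReal.ofReal (cspeed γ t)) ∂π)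
        ≤ (C : ℝ≥0∞) * ∫⁻ x, φ x ∂μ

def ConcentratedOnClosed {d : ℕ} (π : Measure (Curve d)) : Prop :=
  π {γ | IsClosedCurve γ}ᶜ = 0

/-- The circuitation integrand `v(γ(t))·γ'(t)`. -/
def circInt {d : ℕ} (v : Euc d → Euc d) (γ : Curve d) (t : ℝ) : ℝ :=
  @inner ℝ (Euc d) _ (v (cext γ t)) (deriv (cext γ) t)

def In2piZ (r : ℝ) : Prop := ∃ k : ℤ, r = 2 * Real.pi * (k : ℝ)

/-- `γ` is integrable for `v` and has integer circuitation. -/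
def GoodLoop {d : ℕ} (v : Euc d → Euc d) (γ : Curve d) : Prop :=
  IntervalIntegrable (circInt v γ) volume 0 1 ∧
    In2piZ (∫ t in (0:ℝ)..1, circInt v γ t)

/-- `v` has integer circuitation w.r.t. `μ`. -/
def IntegerCirculation {d : ℕ} (μ : Measure (Euc d)) (v : Euc d → Euc d) : Prop :=
  ∀ π : Measure (Curve d), IsTestPlan μ π → ConcentratedOnClosed π →
    ∀ᵐ γ ∂π, GoodLoop v γ

/-- Length of a curve. -/
def clen {d : ℕ} (γ : Curve d) : ℝ := ∫ t in Icc (0:ℝ) 1, cspeed γ t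

/-- `Ω` is saturated for the relation `E`. -/
def SatSet {X : Type*} (E : X → X → Prop) (Ω : Set X) : Prop :=
  ∀ x ∈ Ω, ∀ y, E x y → y ∈ Ω

/-- `E^A`: the smallest equivalence relation on `ℝ^d` whose graph contains
`γ([0,1]) × γ([0,1])` for every `γ ∈ A`. -/
def curveRel {d : ℕ} (A : Set (Curve d)) : Euc d → Euc d → Prop :=
  Relation.EqvGen fun x y => ∃ γ ∈ A, (∃ s : unitInterval, γ s = x) ∧ ∃ t : unitInterval, γ t = y

/-- `Abar` is a Borel set of full `π`-measure realizing the maximal saturated σ-algebra of the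
test plan `π`: every `μ`-measurable `E^A`-saturated set, for any Borel `A` of full `π`-measure,
coincides up to a `μ`-null set with a `μ`-measurable `E^{Abar}`-saturated set. -/
def RealizesMax {d : ℕ} (μ : Measure (Euc d)) (π : Measure (Curve d))
    (Abar : Set (Curve d)) : Prop :=
  MeasurableSet Abar ∧ π Abar = 1 ∧
    ∀ A : Set (Curve d), MeasurableSet A → π A = 1 →
      ∀ Ω : Set (Euc d), NullMeasurableSet Ω μ → SatSet (curveRel A) Ω →
        ∃ Ω' : Set (Euc d), NullMeasurableSet Ω' μ ∧ SatSet (curveRel Abar) Ω' ∧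
          μ (symmDiff Ω Ω') = 0

/-! ### Auxiliary lemmas -/

lemma satSet_mono' {X : Type*} {E F : X → X → Prop} (h : ∀ x y, E x y → F x y)
    {Ω : Set X} (hΩ : SatSet F Ω) : SatSet E Ω :=
  fun x hx y hxy => hΩ x hx y (h x y hxy)

lemma curveRel_mono {d : ℕ} {A B : Set (Curve d)} (h : A ⊆ B) :
    ∀ x y, curveRel A x y → curveRel B x y := by
  intro x y hxy
  exact Relation.EqvGen.mono (fun a b ⟨γ, hγ, hs⟩ => ⟨γ, h hγ, hs⟩) _ _ hxy

lemma satSet_curveRel_mono {d : ℕ} {A B : Set (Curve d)} (h : A ⊆ B)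
    {Ω : Set (Euc d)} (hΩ : SatSet (curveRel B) Ω) : SatSet (curveRel A) Ω :=
  satSet_mono' (curveRel_mono h) hΩ

lemma satSet_iUnion {X ι : Type*} {E : X → X → Prop} {s : ι → Set X}
    (h : ∀ i, SatSet E (s i)) : SatSet E (⋃ i, s i) := by
  intro x hx y hxy
  obtain ⟨i, hi⟩ := Set.mem_iUnion.1 hx
  exact Set.mem_iUnion.2 ⟨i, h i x hi y hxy⟩

lemma satSet_iInter {X ι : Type*} {E : X → X → Prop} {s : ι → Set X}
    (h : ∀ i, SatSet E (s i)) : SatSet E (⋂ i, s i) := by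
  intro x hx y hxy
  exact Set.mem_iInter.2 fun i => h i x (Set.mem_iInter.1 hx i) y hxy

lemma measure_symmDiff_triangle {X : Type*} [MeasurableSpace X] (μ : Measure X)
    (a b c : Set X) : μ (symmDiff a c) ≤ μ (symmDiff a b) + μ (symmDiff b c) :=
  (measure_mono (symmDiff_triangle a b c)).trans (measure_union_le _ _)

/-- A countable family of sets approximating all null-measurable sets in symmetric difference. -/
lemma exists_dense_seq {d : ℕ} (μ : Measure (Euc d)) [IsProbabilityMeasure μ] :
    ∃ f : ℕ → Set (Euc d), ∀ Ω : Set (Euc d), NullMeasurableSet Ω μ →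
      ∀ ε : ℝ≥0∞, 0 < ε → ∃ n, μ (symmDiff Ω (f n)) < ε := by
  obtain ⟨𝒜, h𝒜count, h𝒜dense⟩ := exists_countable_measureDense (μ := μ)
  obtain ⟨f, hf⟩ := h𝒜count.exists_eq_range h𝒜dense.nonempty
  refine ⟨f, fun Ω hΩ ε hε => ?_⟩
  set S := toMeasurable μ Ω with hSdef
  have hae : S =ᵐ[μ] Ω := hΩ.toMeasurable_ae_eq
  have hΩS : μ (symmDiff Ω S) = 0 := measure_symmDiff_eq_zero_iff.2 hae.symm
  -- choose a real ε' with 0 < ofReal ε' ≤ ε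
  set ε' : ℝ≥0∞ := min ε 1 with hε'def
  have hε'pos : 0 < ε' := lt_min hε zero_lt_one
  have hε'top : ε' ≠ ∞ := (min_le_right _ _).trans_lt (by norm_num) |>.ne
  have hε'le : ε' ≤ ε := min_le_left _ _
  have hreal : 0 < ε'.toReal := ENNReal.toReal_pos hε'pos.ne' hε'top
  obtain ⟨t, ht𝒜, ht⟩ := h𝒜dense.approx S (measurableSet_toMeasurable μ Ω)
    (measure_ne_top μ S) ε'.toReal hreal
  rw [ENNReal.ofReal_toReal hε'top] at ht
  obtain ⟨n, hn⟩ : ∃ n, f n = t := by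
    have : t ∈ Set.range f := hf ▸ ht𝒜
    exact this.imp fun _ h => h
  refine ⟨n, lt_of_le_of_lt ?_ (lt_of_lt_of_le ht hε'le)⟩
  calc μ (symmDiff Ω (f n)) ≤ μ (symmDiff Ω S) + μ (symmDiff S (f n)) :=
        measure_symmDiff_triangle μ _ _ _
    _ = μ (symmDiff S t) := by rw [hΩS, zero_add, hn]

/-- every test plan admits a Borel full-measure set of curves realizing the
maximal saturated σ-algebra. -/
theorem stmt_13 {d : ℕ} (hd : 1 ≤ d) (μ : Measure (Euc d)) [IsProbabilityMeasure μ]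
    (π : Measure (Curve d)) (hπ : IsTestPlan μ π) :
    ∃ Abar : Set (Curve d), (∀ γ ∈ Abar, IsLipCurve γ) ∧ RealizesMax μ π Abar := by
  haveI : IsProbabilityMeasure π := hπ.1
  -- a measurable hull of the non-Lipschitz curves
  obtain ⟨N, hNsub, hNmeas, hNnull⟩ := exists_measurable_superset_of_null hπ.2.1
  -- a countable dense family in the measure algebra of μ
  obtain ⟨f, hfApprox⟩ := exists_dense_seq μ
  -- the distance functional
  set Dd : Set (Curve d) → ℕ → ℝ≥0∞ := fun A n =>
    ⨅ (Ω : Set (Euc d)) (_ : NullMeasurableSet Ω μ ∧ SatSet (curveRel A) Ω),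
      μ (symmDiff Ω (f n)) with hDd
  have hDdle : ∀ (A : Set (Curve d)) (n : ℕ) (Ω : Set (Euc d)),
      NullMeasurableSet Ω μ → SatSet (curveRel A) Ω → Dd A n ≤ μ (symmDiff Ω (f n)) := by
    intro A n Ω h1 h2
    exact (iInf_le _ Ω).trans (iInf_le _ ⟨h1, h2⟩)
  have hDdmono : ∀ (A B : Set (Curve d)), A ⊆ B → ∀ n, Dd A n ≤ Dd B n := by
    intro A B hAB n
    refine le_iInf fun Ω => le_iInf fun hΩ => ?_
    exact hDdle A n Ω hΩ.1 (satSet_curveRel_mono hAB hΩ.2)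
  have hDdemp : ∀ (A : Set (Curve d)) (n : ℕ), Dd A n ≤ μ (f n) := by
    intro A n
    have := hDdle A n ∅ (MeasurableSet.empty.nullMeasurableSet) (fun x hx => absurd hx (by simp))
    simpa [symmDiff] using this
  -- the infimum over full-measure Borel sets of curves
  set δ : ℕ → ℝ≥0∞ := fun n =>
    ⨅ (A : Set (Curve d)) (_ : MeasurableSet A ∧ π A = 1), Dd A n with hδdef
  have hδtop : ∀ n, δ n ≠ ∞ := by
    intro n
    have : δ n ≤ Dd Set.univ n :=
      (iInf_le _ Set.univ).trans (iInf_le _ ⟨MeasurableSet.univ, measure_univ⟩)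
    exact ((this.trans (hDdemp _ n)).trans_lt (measure_lt_top μ _)).ne
  -- choose near-optimal sets
  have hkey : ∀ n k : ℕ, ∃ A : Set (Curve d),
      MeasurableSet A ∧ π A = 1 ∧ Dd A n ≤ δ n + (2⁻¹ : ℝ≥0∞) ^ k := by
    intro n k
    have hpos : ((2⁻¹ : ℝ≥0∞) ^ k) ≠ 0 := by
      simp [pow_eq_zero_iff]
    have hlt : δ n < δ n + (2⁻¹ : ℝ≥0∞) ^ k := ENNReal.lt_add_right (hδtop n) hpos
    rw [hδdef] at hlt
    obtain ⟨A, hA⟩ := iInf_lt_iff.1 hlt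
    obtain ⟨hAprop, hAlt⟩ := iInf_lt_iff.1 hA
    exact ⟨A, hAprop.1, hAprop.2, hAlt.le⟩
  choose A hAmeas hAone hAle using hkey
  -- the maximal set
  set Abar : Set (Curve d) := (⋂ n, ⋂ k, A n k) ∩ Nᶜ with hAbardef
  have hAbarmeas : MeasurableSet Abar :=
    (MeasurableSet.iInter fun n => MeasurableSet.iInter fun k => hAmeas n k).inter hNmeas.compl
  have hAbarone : π Abar = 1 := by
    rw [← prob_compl_eq_zero_iff hAbarmeas]
    have hceq : Abarᶜ = (⋃ n, ⋃ k, (A n k)ᶜ) ∪ N := by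
      simp [hAbardef, Set.compl_inter, Set.compl_iInter]
    rw [hceq]
    exact measure_union_null
      (measure_iUnion_null fun n => measure_iUnion_null fun k =>
        (prob_compl_eq_zero_iff (hAmeas n k)).2 (hAone n k)) hNnull
  have hAbarsub : ∀ n k, Abar ⊆ A n k := by
    intro n k γ hγ
    exact Set.mem_iInter.1 (Set.mem_iInter.1 hγ.1 n) k
  have hAbarLip : ∀ γ ∈ Abar, IsLipCurve γ := by
    intro γ hγ
    by_contra h
    exact hγ.2 (hNsub h)
  -- Dd Abar n achieves the infimum
  have hAbarDd : ∀ n, Dd Abar n = δ n := by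
    intro n
    refine le_antisymm ?_ ((iInf_le _ Abar).trans (iInf_le _ ⟨hAbarmeas, hAbarone⟩))
    refine ENNReal.le_of_forall_pos_le_add fun ε hε _ => ?_
    have h2 : Filter.Tendsto (fun k : ℕ => δ n + (2⁻¹ : ℝ≥0∞) ^ k) Filter.atTop
        (nhds (δ n)) := by
      have := ENNReal.tendsto_pow_atTop_nhds_zero_of_lt_one
        (by norm_num : (2⁻¹ : ℝ≥0∞) < 1)
      simpa using (Filter.Tendsto.const_add (δ n) this)
    have hlt : δ n < δ n + ε := ENNReal.lt_add_right (hδtop n)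
      (by exact_mod_cast hε.ne')
    obtain ⟨k, hk⟩ := (h2.eventually_lt_const hlt).exists
    exact ((hDdmono _ _ (hAbarsub n k) n).trans (hAle n k)).trans hk.le
  -- the main property
  refine ⟨Abar, hAbarLip, hAbarmeas, hAbarone, ?_⟩
  intro A' hA'meas hA'one Ω hΩnm hΩsat
  set B : Set (Curve d) := A' ∩ Abar with hBdef
  have hBmeas : MeasurableSet B := hA'meas.inter hAbarmeas
  have hBone : π B = 1 := by
    rw [← prob_compl_eq_zero_iff hBmeas, hBdef, Set.compl_inter]
    refine le_antisymm ((measure_union_le _ _).trans ?_) zero_le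
    rw [(prob_compl_eq_zero_iff hA'meas).2 hA'one,
      (prob_compl_eq_zero_iff hAbarmeas).2 hAbarone, add_zero]
  have hΩsatB : SatSet (curveRel B) Ω := satSet_curveRel_mono Set.inter_subset_left hΩsat
  have hDB : ∀ n, Dd B n = δ n := by
    intro n
    refine le_antisymm ?_ ((iInf_le _ B).trans (iInf_le _ ⟨hBmeas, hBone⟩))
    exact (hDdmono _ _ Set.inter_subset_right n).trans (hAbarDd n).le
  -- approximate Ω by Abar-saturated sets
  have approx : ∀ ε : ℝ≥0∞, 0 < ε → ε ≠ ∞ → ∃ Ω' : Set (Euc d),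
      (NullMeasurableSet Ω' μ ∧ SatSet (curveRel Abar) Ω') ∧ μ (symmDiff Ω Ω') < ε := by
    intro ε hε hεtop
    by_contra hcon
    push_neg at hcon
    have hε3pos : 0 < ε / 3 := ENNReal.div_pos hε.ne' (by norm_num)
    have hε3top : ε / 3 ≠ ∞ := by
      exact (ENNReal.div_lt_top hεtop (by norm_num)).ne
    obtain ⟨n, hn⟩ := hfApprox Ω hΩnm (ε / 3) hε3pos
    have h1 : Dd B n < ε / 3 := (hDdle B n Ω hΩnm hΩsatB).trans_lt hn
    have h2 : Dd Abar n < ε / 3 := by rw [hAbarDd n, ← hDB n]; exact h1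
    rw [hDd] at h2
    obtain ⟨Ω', hΩ'⟩ := iInf_lt_iff.1 h2
    obtain ⟨hΩ'prop, hΩ'lt⟩ := iInf_lt_iff.1 hΩ'
    have hbad : ε ≤ μ (symmDiff Ω Ω') := hcon Ω' hΩ'prop
    have : μ (symmDiff Ω Ω') ≤ μ (symmDiff Ω (f n)) + μ (symmDiff (f n) Ω') :=
      measure_symmDiff_triangle μ _ _ _
    rw [symmDiff_comm (f n) Ω'] at this
    have hlt : μ (symmDiff Ω Ω') < ε / 3 + ε / 3 :=
      this.trans_lt (ENNReal.add_lt_add hn hΩ'lt)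
    have : ε / 3 + ε / 3 < ε := by
      conv_rhs => rw [← ENNReal.add_thirds ε]
      exact ENNReal.lt_add_right (by simp [ENNReal.add_ne_top, hε3top]) hε3pos.ne'
    exact absurd (hbad.trans_lt (hlt.trans this)) (lt_irrefl ε)
  -- extract a sequence and take the limsup
  have hpowpos : ∀ k : ℕ, (0 : ℝ≥0∞) < 2⁻¹ ^ k := fun k =>
    pos_iff_ne_zero.2 (by simp [pow_eq_zero_iff])
  have hpowtop : ∀ k : ℕ, ((2⁻¹ : ℝ≥0∞) ^ k) ≠ ∞ := fun k =>
    (ENNReal.pow_lt_top (by norm_num)).ne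
  choose g hg hgsmall using fun k => approx ((2⁻¹ : ℝ≥0∞) ^ k) (hpowpos k) (hpowtop k)
  set Ω' : Set (Euc d) := ⋂ m, ⋃ k, g (m + k) with hΩ'def
  have hΩ'nm : NullMeasurableSet Ω' μ :=
    NullMeasurableSet.iInter fun m => NullMeasurableSet.iUnion fun k => (hg (m + k)).1
  have hΩ'sat : SatSet (curveRel Abar) Ω' :=
    satSet_iInter fun m => satSet_iUnion fun k => (hg (m + k)).2
  refine ⟨Ω', hΩ'nm, hΩ'sat, ?_⟩
  -- the two halves of the symmetric difference are null
  have hdiff1 : ∀ k, μ (g k \ Ω) ≤ (2⁻¹ : ℝ≥0∞) ^ k := fun k =>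
    le_of_lt ((measure_mono (by rw [Set.symmDiff_def]; exact Set.subset_union_right)).trans_lt
      (hgsmall k))
  have hdiff2 : ∀ k, μ (Ω \ g k) ≤ (2⁻¹ : ℝ≥0∞) ^ k := fun k =>
    le_of_lt ((measure_mono (by rw [Set.symmDiff_def]; exact Set.subset_union_left)).trans_lt
      (hgsmall k))
  have htendsto : Filter.Tendsto (fun m : ℕ => (2⁻¹ : ℝ≥0∞) ^ m * (1 - 2⁻¹)⁻¹)
      Filter.atTop (nhds 0) := by
    have h0 := ENNReal.tendsto_pow_atTop_nhds_zero_of_lt_one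
      (by norm_num : (2⁻¹ : ℝ≥0∞) < 1)
    have hC : ((1 : ℝ≥0∞) - 2⁻¹)⁻¹ ≠ ∞ := by rw [ENNReal.one_sub_inv_two]; simp
    have := ENNReal.Tendsto.mul_const h0 (Or.inr hC)
    simpa using this
  have hOne : μ (Ω' \ Ω) = 0 := by
    have hbound : ∀ m : ℕ, μ (Ω' \ Ω) ≤ (2⁻¹ : ℝ≥0∞) ^ m * (1 - 2⁻¹)⁻¹ := by
      intro m
      have hsub : Ω' \ Ω ⊆ ⋃ k, (g (m + k) \ Ω) := by
        intro x hx
        obtain ⟨k, hk⟩ := Set.mem_iUnion.1 (Set.mem_iInter.1 hx.1 m)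
        exact Set.mem_iUnion.2 ⟨k, hk, hx.2⟩
      calc μ (Ω' \ Ω) ≤ μ (⋃ k, (g (m + k) \ Ω)) := measure_mono hsub
        _ ≤ ∑' k, μ (g (m + k) \ Ω) := measure_iUnion_le _
        _ ≤ ∑' k : ℕ, (2⁻¹ : ℝ≥0∞) ^ (m + k) := ENNReal.tsum_le_tsum fun k => hdiff1 (m + k)
        _ = (2⁻¹ : ℝ≥0∞) ^ m * ∑' k : ℕ, (2⁻¹ : ℝ≥0∞) ^ k := by
            simp_rw [pow_add]; exact ENNReal.tsum_mul_left
        _ = (2⁻¹ : ℝ≥0∞) ^ m * (1 - 2⁻¹)⁻¹ := by rw [ENNReal.tsum_geometric]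
    have := ge_of_tendsto' htendsto hbound
    simpa using this
  have hTwo : μ (Ω \ Ω') = 0 := by
    have : Ω \ Ω' ⊆ ⋃ m, (Ω \ ⋃ k, g (m + k)) := by
      intro x hx
      rw [hΩ'def] at hx
      obtain ⟨hxΩ, hx2⟩ := hx
      rw [Set.mem_iInter] at hx2
      push_neg at hx2
      obtain ⟨m, hm⟩ := hx2
      exact Set.mem_iUnion.2 ⟨m, hxΩ, hm⟩
    refine le_antisymm ((measure_mono this).trans ?_) zero_le
    have hterm : ∀ m, μ (Ω \ ⋃ k, g (m + k)) = 0 := by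
      intro m
      have hb : ∀ j : ℕ, μ (Ω \ ⋃ k, g (m + k)) ≤ (2⁻¹ : ℝ≥0∞) ^ (m + j) := by
        intro j
        refine (measure_mono ?_).trans (hdiff2 (m + j))
        exact Set.diff_subset_diff_right (Set.subset_iUnion (fun k => g (m + k)) j)
      have ht2 : Filter.Tendsto (fun j : ℕ => (2⁻¹ : ℝ≥0∞) ^ (m + j)) Filter.atTop (nhds 0) := by
        have h0 := ENNReal.tendsto_pow_atTop_nhds_zero_of_lt_one
          (by norm_num : (2⁻¹ : ℝ≥0∞) < 1)
        have := ENNReal.Tendsto.const_mul (a := (2⁻¹ : ℝ≥0∞) ^ m) h0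
          (Or.inr (hpowtop m))
        simpa [pow_add] using this
      have := ge_of_tendsto' ht2 hb
      simpa using this
    refine le_trans (measure_iUnion_le _) ?_
    simp [hterm]
  rw [Set.symmDiff_def]
  exact measure_union_null hTwo hOne
end
end

section
/- For every integer d ≥ 1, every t ∈ [0,1], and every Borel set A ⊆ ℝ^d, one has (L^d ⊗ L^d)({(x, y) ∈ [0,1]^d × [0,1]^d : (1−t)x + ty ∈ A}) ≤ 2^d · L^d(A). Equivalently, the pushforward of the restriction of L^d ⊗ L^d to [0,1]^d × [0,1]^d under the map (x, y) ↦ (1−t)x + ty is absolutely continuous with respect to L^d with density bounded by 2^d. -/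
open MeasureTheory Set
open scoped ENNReal

noncomputable section

lemma cube_meas (d : ℕ) : MeasurableSet {x : Euc d | ∀ i, x i ∈ Icc (0:ℝ) 1} := by
  have : {x : Euc d | ∀ i, x i ∈ Icc (0:ℝ) 1} = ⋂ i, (fun x : Euc d => x i) ⁻¹' Icc (0:ℝ) 1 := by
    ext x; simp
  rw [this]
  exact MeasurableSet.iInter fun i => measurableSet_Icc.preimage ((measurable_pi_apply i).comp (MeasurableEquiv.toLp 2 (Fin d → ℝ)).symm.measurable)

lemma cube_vol (d : ℕ) : volume {x : Euc d | ∀ i, x i ∈ Icc (0:ℝ) 1} = 1 := by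
  have h := (EuclideanSpace.volume_preserving_symm_measurableEquiv_toLp (Fin d)).measure_preimage
    (s := Set.univ.pi fun _ : Fin d => Icc (0:ℝ) 1)
    (MeasurableSet.univ_pi fun _ => measurableSet_Icc).nullMeasurableSet
  have he : (MeasurableEquiv.toLp 2 (Fin d → ℝ)).symm ⁻¹' (Set.univ.pi fun _ => Icc (0:ℝ) 1)
      = {x : Euc d | ∀ i, x i ∈ Icc (0:ℝ) 1} := by
    ext x; simp [MeasurableEquiv.coe_toLp_symm, Set.mem_pi, Pi.le_def, forall_and]
  rw [he] at h
  rw [h, volume_pi_pi]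
  simp

lemma slice_bound (d : ℕ) (c : ℝ) (hc : 1/2 ≤ c) (v : Euc d) (A : Set (Euc d)) :
    volume {y : Euc d | v + c • y ∈ A} ≤ 2 ^ d * volume A := by
  have hc0 : c ≠ 0 := by positivity
  have h1 : {y : Euc d | v + c • y ∈ A} = (c • ·) ⁻¹' ((v + ·) ⁻¹' A) := rfl
  rw [h1, Measure.addHaar_preimage_smul volume hc0, measure_preimage_add,
    finrank_euclideanSpace_fin]
  gcongr
  have : (2:ℝ≥0∞) ^ d = ENNReal.ofReal (2 ^ d) := by
    simp [ENNReal.ofReal_pow]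
  rw [this]
  apply ENNReal.ofReal_le_ofReal
  rw [abs_of_pos (by positivity)]
  rw [inv_le_comm₀ (by positivity) (by positivity)]
  calc ((2:ℝ)^d)⁻¹ = (1/2)^d := by rw [one_div, inv_pow]
  _ ≤ c ^ d := by gcongr

/-- the linear interpolation of two points of the unit cube distributes mass with
density at most `2^d` with respect to Lebesgue measure. -/
theorem stmt_19 (d : ℕ) (hd : 1 ≤ d) (t : ℝ) (ht : t ∈ Icc (0:ℝ) 1) :
    (∀ A : Set (Euc d), MeasurableSet A →
      (volume : Measure (Euc d × Euc d))
          {p : Euc d × Euc d | (∀ i, p.1 i ∈ Icc (0:ℝ) 1) ∧ (∀ i, p.2 i ∈ Icc (0:ℝ) 1) ∧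
            (1 - t) • p.1 + t • p.2 ∈ A}
        ≤ 2 ^ d * volume A) ∧
    Measure.map (fun p : Euc d × Euc d => (1 - t) • p.1 + t • p.2)
        ((volume : Measure (Euc d × Euc d)).restrict
          ({x : Euc d | ∀ i, x i ∈ Icc (0:ℝ) 1} ×ˢ {x : Euc d | ∀ i, x i ∈ Icc (0:ℝ) 1}))
      ≤ (2 ^ d : ℝ≥0∞) • (volume : Measure (Euc d)) := by
  obtain ⟨ht0, ht1⟩ := ht
  have hC := cube_meas d
  have hCv := cube_vol d
  set C : Set (Euc d) := {x : Euc d | ∀ i, x i ∈ Icc (0:ℝ) 1} with hCdef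
  have hf : Measurable (fun p : Euc d × Euc d => (1 - t) • p.1 + t • p.2) := by fun_prop
  have main : ∀ A : Set (Euc d), MeasurableSet A →
      (volume : Measure (Euc d × Euc d))
          {p : Euc d × Euc d | (∀ i, p.1 i ∈ Icc (0:ℝ) 1) ∧ (∀ i, p.2 i ∈ Icc (0:ℝ) 1) ∧
            (1 - t) • p.1 + t • p.2 ∈ A} ≤ 2 ^ d * volume A := by
    intro A hA
    rcases le_total t (1/2) with hhalf | hhalf
    · -- 1 - t ≥ 1/2 : integrate in x for fixed y
      have h2 : (1:ℝ)/2 ≤ 1 - t := by linarith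
      set T : Set (Euc d × Euc d) :=
        {p : Euc d × Euc d | (∀ i, p.2 i ∈ Icc (0:ℝ) 1) ∧ (1 - t) • p.1 + t • p.2 ∈ A} with hTdef
      have hT : MeasurableSet T := by
        have : T = (Set.univ ×ˢ C) ∩
            (fun p : Euc d × Euc d => (1 - t) • p.1 + t • p.2) ⁻¹' A := by
          ext p
          simp only [hTdef, hCdef, Set.mem_setOf_eq, Set.mem_inter_iff, Set.mem_prod,
            Set.mem_univ, true_and, Set.mem_preimage]
        rw [this]
        exact (MeasurableSet.univ.prod hC).inter (hA.preimage hf)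
      refine le_trans (measure_mono (show _ ⊆ T from fun p hp => ⟨hp.2.1, hp.2.2⟩)) ?_
      rw [Measure.volume_eq_prod, Measure.prod_apply_symm hT]
      have key : ∀ y : Euc d, volume ((fun x => (x, y)) ⁻¹' T)
          ≤ C.indicator (fun _ => 2 ^ d * volume A) y := by
        intro y
        by_cases hy : y ∈ C
        · rw [Set.indicator_of_mem hy]
          have hpre : ((fun x => (x, y)) ⁻¹' T) = {x : Euc d | t • y + (1 - t) • x ∈ A} := by
            ext x
            simp only [hTdef, Set.mem_preimage, Set.mem_setOf_eq]
            rw [add_comm]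
            exact and_iff_right hy
          rw [hpre]
          exact slice_bound d (1 - t) h2 (t • y) A
        · have hpre : ((fun x => (x, y)) ⁻¹' T) = ∅ := by
            ext x
            simp only [hTdef, Set.mem_preimage, Set.mem_setOf_eq, Set.mem_empty_iff_false,
              iff_false]
            exact fun h => hy h.1
          rw [hpre, Set.indicator_of_notMem hy]
          simp
      refine le_trans (lintegral_mono key) ?_
      rw [lintegral_indicator hC, setLIntegral_const, hCv, mul_one]
    · -- t ≥ 1/2 : integrate in y for fixed x
      set T : Set (Euc d × Euc d) :=
        {p : Euc d × Euc d | (∀ i, p.1 i ∈ Icc (0:ℝ) 1) ∧ (1 - t) • p.1 + t • p.2 ∈ A} with hTdef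
      have hT : MeasurableSet T := by
        have : T = (C ×ˢ Set.univ) ∩
            (fun p : Euc d × Euc d => (1 - t) • p.1 + t • p.2) ⁻¹' A := by
          ext p
          simp only [hTdef, hCdef, Set.mem_setOf_eq, Set.mem_inter_iff, Set.mem_prod,
            Set.mem_univ, and_true, Set.mem_preimage]
        rw [this]
        exact (hC.prod MeasurableSet.univ).inter (hA.preimage hf)
      refine le_trans (measure_mono (show _ ⊆ T from fun p hp => ⟨hp.1, hp.2.2⟩)) ?_
      rw [Measure.volume_eq_prod, Measure.prod_apply hT]
      have key : ∀ x : Euc d, volume (Prod.mk x ⁻¹' T)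
          ≤ C.indicator (fun _ => 2 ^ d * volume A) x := by
        intro x
        by_cases hx : x ∈ C
        · rw [Set.indicator_of_mem hx]
          have hpre : (Prod.mk x ⁻¹' T) = {y : Euc d | (1 - t) • x + t • y ∈ A} := by
            ext y
            simp only [hTdef, Set.mem_preimage, Set.mem_setOf_eq]
            exact and_iff_right hx
          rw [hpre]
          exact slice_bound d t hhalf ((1 - t) • x) A
        · have hpre : (Prod.mk x ⁻¹' T) = ∅ := by
            ext y
            simp only [hTdef, Set.mem_preimage, Set.mem_setOf_eq, Set.mem_empty_iff_false,
              iff_false]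
            exact fun h => hx h.1
          rw [hpre, Set.indicator_of_notMem hx]
          simp
      refine le_trans (lintegral_mono key) ?_
      rw [lintegral_indicator hC, setLIntegral_const, hCv, mul_one]
  refine ⟨main, ?_⟩
  rw [Measure.le_iff]
  intro s hs
  rw [Measure.map_apply hf hs, Measure.restrict_apply (hf hs), Measure.smul_apply, smul_eq_mul]
  have : (fun p : Euc d × Euc d => (1 - t) • p.1 + t • p.2) ⁻¹' s ∩ C ×ˢ C
      = {p : Euc d × Euc d | (∀ i, p.1 i ∈ Icc (0:ℝ) 1) ∧ (∀ i, p.2 i ∈ Icc (0:ℝ) 1) ∧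
          (1 - t) • p.1 + t • p.2 ∈ s} := by
    ext p
    simp only [hCdef, Set.mem_inter_iff, Set.mem_preimage, Set.mem_prod, Set.mem_setOf_eq]
    tauto
  rw [this]
  exact main s hs
end
end
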